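/- In the nilHecke algebra NH_n with p-differential ∂, the element e_n' = ψ_{w_0} · y_1^0 y_2^1 ⋯ y_n^{n-1} satisfies ∂(e_n') = −Σ_{i=1}^n (n−i) y_i · e_n'. -/

import Mathlib

/-! The nilHecke algebra `NH n` over a field `k`, presented by generators
`y i` (for `i < n`) and `ψ i` (for `i + 1 < n`) and the nilHecke relations
(generators out of range are set to zero). Indices are 0-based: `ψ i` crosses
strands `i` and `i+1`. -/

namespace Stmt13

variable (k : Type*) [Field k]

/-- The distinguished generators of the free algebra: `Yf i` will become `y i`,
`Pf i` will become `ψ i`. -/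
def Yf (i : ℕ) : FreeAlgebra k (ℕ ⊕ ℕ) := FreeAlgebra.ι k (Sum.inl i)

def Pf (i : ℕ) : FreeAlgebra k (ℕ ⊕ ℕ) := FreeAlgebra.ι k (Sum.inr i)

/-- The defining relations of the nilHecke algebra `NH_n`. -/
inductive Rel (n : ℕ) : FreeAlgebra k (ℕ ⊕ ℕ) → FreeAlgebra k (ℕ ⊕ ℕ) → Prop
  | yy (i j : ℕ) : Rel n (Yf k i * Yf k j) (Yf k j * Yf k i)
  | ypsi (i j : ℕ) (h1 : i ≠ j) (h2 : i ≠ j + 1) :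
      Rel n (Yf k i * Pf k j) (Pf k j * Yf k i)
  | yp (i : ℕ) (h : i + 1 < n) : Rel n (Yf k i * Pf k i) (Pf k i * Yf k (i+1) + 1)
  | py (i : ℕ) (h : i + 1 < n) : Rel n (Pf k i * Yf k i) (Yf k (i+1) * Pf k i + 1)
  | psisq (i : ℕ) : Rel n (Pf k i * Pf k i) 0
  | far (i j : ℕ) (h : i + 1 < j) : Rel n (Pf k i * Pf k j) (Pf k j * Pf k i)
  | braid (i : ℕ) :
      Rel n (Pf k i * Pf k (i+1) * Pf k i) (Pf k (i+1) * Pf k i * Pf k (i+1))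
  | ybound (i : ℕ) (h : n ≤ i) : Rel n (Yf k i) 0
  | pbound (i : ℕ) (h : n ≤ i + 1) : Rel n (Pf k i) 0

/-- The nilHecke algebra on `n` strands. -/
abbrev NH (n : ℕ) := RingQuot (Rel k n)

/-- The dot generator `y i`. -/
def y (n i : ℕ) : NH k n := RingQuot.mkAlgHom k (Rel k n) (Yf k i)

/-- The crossing generator `ψ i`. -/
def psi (n i : ℕ) : NH k n := RingQuot.mkAlgHom k (Rel k n) (Pf k i)

/-- The product `ψ_L := ψ_{i₁} ⋯ ψ_{i_r}` along a list of indices. -/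
def psiList (n : ℕ) (L : List ℕ) : NH k n := (L.map (psi k n)).prod

/-- `ψ_{w₀}`: the nilHecke element of the longest permutation of `S_n`, defined by the
reduced word `(s_0)(s_1 s_0)(s_2 s_1 s_0)⋯(s_{n-2} ⋯ s_0)`. -/
def psiW0 (n : ℕ) : NH k n :=
  ((List.range (n-1)).map (fun m => psiList k n ((List.range (m+1)).reverse))).prod

/-- The element `e_n = y_0^{n-1} y_1^{n-2} ⋯ y_{n-1}^0 · ψ_{w₀}`. -/
def eIdem (n : ℕ) : NH k n :=
  ((List.range n).map (fun i => y k n i ^ (n - 1 - i))).prod * psiW0 k n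



/-- The quasi-idempotent `e_n' = ψ_{w₀} · y_0^0 y_1^1 ⋯ y_{n-1}^{n-1}`. -/
def ePrime (n : ℕ) : NH k n :=
  psiW0 k n * ((List.range n).map (fun i => y k n i ^ i)).prod

end Stmt13


/-! Write `ψ_{w₀} = W_{n-1}`, where `W_0 = 1` and `W_{m+1} = W_m · ψ_m ⋯ ψ_0`. The dots commute,
so `∂(y_0^0 ⋯ y_{n-1}^{n-1}) = (Σ i y_i) · y_0^0 ⋯ y_{n-1}^{n-1}`, and it remains to show
`∂ W_m = -(Σ (m - i) y_i) W_m - W_m (Σ i y_i)` by induction on `m`. Expanding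
`∂(W_m · ψ_m ⋯ ψ_0)` by the Leibniz rule leaves dots in front of `ψ_m ⋯ ψ_0`; pushing them
through shifts `y_j` to `y_{j+1}` up to terms beginning with some `ψ_j`, `j < m`, all of which
vanish since `W_m ψ_j = 0`. -/

section Leibniz

variable {A : Type*} [Ring A] (D : A → A) (hD : ∀ a b : A, D (a * b) = D a * b + a * D b)
include hD

theorem leibniz_map_one : D 1 = 0 := by
  have h := hD 1 1
  simp only [one_mul, mul_one] at h
  exact left_eq_add.mp h

theorem leibniz_map_pow_of_eq_mul_self {a : A} (ha : D a = a * a) (t : ℕ) :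
    D (a ^ t) = t • a ^ (t + 1) := by
  induction t with
  | zero => simp [leibniz_map_one D hD]
  | succ t ih =>
    rw [pow_succ, hD, ih, ha, smul_mul_assoc, ← pow_succ, ← mul_assoc, ← pow_succ, ← pow_succ,
      succ_nsmul]

theorem leibniz_map_prod_range_pow_self {f : ℕ → A} (hcomm : ∀ i j, Commute (f i) (f j))
    (hf : ∀ i, D (f i) = f i * f i) (t : ℕ) :
    D ((List.range t).map (fun i => f i ^ i)).prod
      = (∑ i ∈ Finset.range t, i • f i) * ((List.range t).map (fun i => f i ^ i)).prod := by
  induction t with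
  | zero => simp [leibniz_map_one D hD]
  | succ t ih =>
    set F := ((List.range t).map (fun i => f i ^ i)).prod
    have hF : Commute (f t) F := Commute.list_prod_right _ _ fun x hx => by
      obtain ⟨i, -, rfl⟩ := List.mem_map.mp hx
      exact (hcomm t i).pow_right i
    simp only [List.range_succ, List.map_append, List.prod_append, List.map_singleton,
      List.prod_singleton]
    rw [hD, ih, leibniz_map_pow_of_eq_mul_self D hD (hf t), Finset.sum_range_succ, add_mul,
      mul_smul_comm, pow_succ', ← mul_assoc F, ← hF.eq, mul_assoc, mul_assoc, smul_mul_assoc]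

end Leibniz

namespace Stmt13

open Finset

variable {k : Type*} [Field k] {n : ℕ}

local notation "Y" => y k n
local notation "ψ" => psi k n

theorem commute_y_y (i j : ℕ) : Commute (Y i) (Y j) := by
  rw [commute_iff_eq]
  simpa [y] using RingQuot.mkAlgHom_rel k (Rel.yy (k := k) (n := n) i j)

theorem commute_y_psi {i j : ℕ} (h₁ : i ≠ j) (h₂ : i ≠ j + 1) : Commute (Y i) (ψ j) := by
  rw [commute_iff_eq]
  simpa [y, psi] using RingQuot.mkAlgHom_rel k (Rel.ypsi (k := k) (n := n) i j h₁ h₂)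

theorem y_mul_psi_self {i : ℕ} (h : i + 1 < n) : Y i * ψ i = ψ i * Y (i + 1) + 1 := by
  simpa [y, psi] using RingQuot.mkAlgHom_rel k (Rel.yp (k := k) i h)

theorem psi_mul_y_self {i : ℕ} (h : i + 1 < n) : ψ i * Y i = Y (i + 1) * ψ i + 1 := by
  simpa [y, psi] using RingQuot.mkAlgHom_rel k (Rel.py (k := k) i h)

theorem psi_mul_psi_self (i : ℕ) : ψ i * ψ i = 0 := by
  simpa [psi] using RingQuot.mkAlgHom_rel k (Rel.psisq (k := k) (n := n) i)

theorem commute_psi_psi {i j : ℕ} (h : i + 1 < j) : Commute (ψ i) (ψ j) := by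
  rw [commute_iff_eq]
  simpa [psi] using RingQuot.mkAlgHom_rel k (Rel.far (k := k) (n := n) i j h)

theorem psi_braid (i : ℕ) : ψ i * ψ (i + 1) * ψ i = ψ (i + 1) * ψ i * ψ (i + 1) := by
  simpa [psi] using RingQuot.mkAlgHom_rel k (Rel.braid (k := k) (n := n) i)

theorem y_succ_mul_psi_self {i : ℕ} (h : i + 1 < n) : Y (i + 1) * ψ i = ψ i * Y i - 1 := by
  rw [psi_mul_y_self h, add_sub_cancel_right]

theorem commute_y_add_y_succ_psi_self {i : ℕ} (h : i + 1 < n) :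
    Commute (Y i + Y (i + 1)) (ψ i) := by
  rw [Commute, SemiconjBy, add_mul, mul_add, y_mul_psi_self h, psi_mul_y_self h,
    y_succ_mul_psi_self h]
  abel

theorem commute_sum_y_psi {i s : ℕ} (h : i + 1 < n) (hs : i + 2 ≤ s) :
    Commute (∑ j ∈ range s, Y j) (ψ i) := by
  induction s, hs using Nat.le_induction with
  | base =>
    rw [sum_range_succ, sum_range_succ, add_assoc]
    exact (Commute.sum_left _ _ _ fun j hj => commute_y_psi (by simp at hj; omega)
      (by simp at hj; omega)).add_left (commute_y_add_y_succ_psi_self h)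
  | succ s hs ih =>
    rw [sum_range_succ]
    exact ih.add_left (commute_y_psi (by omega) (by omega))

/- The negation of `NH k n` elaborates to `RingQuot.instNeg`, which `rw` and `simp` do not match
against the generic `neg_mul` and `mul_neg`. -/
theorem NH.neg_mul (a b : NH k n) : -a * b = -(a * b) := _root_.neg_mul a b

theorem NH.mul_neg (a b : NH k n) : a * -b = -(a * b) := _root_.mul_neg a b

variable (k n) in
def psiDesc (m : ℕ) : NH k n := psiList k n (List.range (m + 1)).reverse

variable (k n) in
def psiLongest (m : ℕ) : NH k n := ((List.range m).map (psiDesc k n)).prod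

local notation "β" => psiDesc k n
local notation "W" => psiLongest k n

theorem psiW0_eq_psiLongest : psiW0 k n = W (n - 1) := rfl

theorem psiDesc_eq_psi_mul (m : ℕ) : β m = ψ m * psiList k n (List.range m).reverse := by
  simp [psiDesc, psiList, List.range_succ]

theorem psiDesc_zero : β 0 = ψ 0 := by
  simp [psiDesc_eq_psi_mul, psiList]

theorem psiDesc_succ (m : ℕ) : β (m + 1) = ψ (m + 1) * β m :=
  psiDesc_eq_psi_mul (m + 1)

theorem psiLongest_zero : W 0 = 1 := rfl

theorem psiLongest_succ (m : ℕ) : W (m + 1) = W m * β m := by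
  simp [psiLongest, List.range_succ]

theorem commute_psiDesc {c : NH k n} {m : ℕ} (h : ∀ j ≤ m, Commute c (ψ j)) :
    Commute c (β m) :=
  Commute.list_prod_right _ _ fun x hx => by
    obtain ⟨j, hj, rfl⟩ := List.mem_map.mp hx
    exact h j (Nat.lt_succ_iff.mp (List.mem_range.mp (List.mem_reverse.mp hj)))

theorem commute_psiLongest {c : NH k n} {m : ℕ} (h : ∀ j < m, Commute c (ψ j)) :
    Commute c (W m) :=
  Commute.list_prod_right _ _ fun x hx => by
    obtain ⟨t, ht, rfl⟩ := List.mem_map.mp hx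
    exact commute_psiDesc fun j hj => h j (lt_of_le_of_lt hj (List.mem_range.mp ht))

theorem commute_y_psiDesc {s m : ℕ} (h : m + 1 < s) : Commute (Y s) (β m) :=
  commute_psiDesc fun _ hj => commute_y_psi (by omega) (by omega)

theorem commute_y_psiLongest {s m : ℕ} (h : m < s) : Commute (Y s) (W m) :=
  commute_psiLongest fun _ hj => commute_y_psi (by omega) (by omega)

theorem commute_sum_y_psiLongest {m : ℕ} (h : m < n) :
    Commute (∑ j ∈ range (m + 1), Y j) (W m) :=
  commute_psiLongest fun _ hi => commute_sum_y_psi (by omega) (by omega)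

theorem psiDesc_mul_psi_zero (m : ℕ) : β m * ψ 0 = 0 := by
  induction m with
  | zero => rw [psiDesc_zero, psi_mul_psi_self]
  | succ m ih => rw [psiDesc_succ, mul_assoc, ih, mul_zero]

theorem psiDesc_mul_psi_succ {j m : ℕ} (h : j < m) : β m * ψ (j + 1) = ψ j * β m := by
  induction m with
  | zero => omega
  | succ m ih =>
    rw [psiDesc_succ]
    rcases Nat.lt_succ_iff_lt_or_eq.mp h with h | rfl
    · rw [mul_assoc, ih h, ← mul_assoc, (commute_psi_psi (show j + 1 < m + 1 by omega)).symm.eq,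
        mul_assoc]
    · cases j with
      | zero => rw [psiDesc_zero, ← mul_assoc, psi_braid]
      | succ j =>
        have hc : β j * ψ (j + 2) = ψ (j + 2) * β j :=
          (commute_psiDesc fun i hi => (commute_psi_psi (by omega)).symm).eq.symm
        rw [psiDesc_succ]
        simp only [mul_assoc]
        rw [hc]
        simp only [← mul_assoc]
        rw [psi_braid]

theorem psiLongest_mul_psi {j m : ℕ} (h : j < m) : W m * ψ j = 0 := by
  induction m generalizing j with
  | zero => omega
  | succ m ih =>
    rw [psiLongest_succ, mul_assoc]
    cases j with
    | zero => rw [psiDesc_mul_psi_zero, mul_zero]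
    | succ j => rw [psiDesc_mul_psi_succ (by omega), ← mul_assoc, ih (by omega), zero_mul]

theorem mul_psiDesc_eq_zero {x : NH k n} {m : ℕ} (hx : x * ψ m = 0) : x * β m = 0 := by
  rw [psiDesc_eq_psi_mul, ← mul_assoc, hx, zero_mul]

theorem mul_psi_mul_psi_eq_zero {x : NH k n} {m : ℕ} (hx : ∀ i < m + 1, x * ψ i = 0) {i : ℕ}
    (hi : i < m) : x * ψ (m + 1) * ψ i = 0 := by
  rw [mul_assoc, ← (commute_psi_psi (show i + 1 < m + 1 by omega)).eq, ← mul_assoc,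
    hx i (by omega), zero_mul]

/-- Pushing `y_{j+1}` through `ψ_m ⋯ ψ_0` gives `y_{j+2}` up to terms starting with `ψ_j`, which
`x` kills. -/
theorem mul_y_succ_mul_psiDesc {x : NH k n} {j m : ℕ} (hx : ∀ i < m, x * ψ i = 0) (hj : j < m)
    (h : m + 1 < n) : x * Y (j + 1) * β m = x * β m * Y (j + 2) := by
  induction m generalizing x with
  | zero => omega
  | succ m ih =>
    rw [psiDesc_succ]
    rcases Nat.lt_succ_iff_lt_or_eq.mp hj with hj | rfl
    · calc x * Y (j + 1) * (ψ (m + 1) * β m) = x * ψ (m + 1) * Y (j + 1) * β m := by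
            rw [mul_assoc x, ← mul_assoc (Y _), (commute_y_psi (by omega) (by omega)).eq]
            simp only [mul_assoc]
        _ = x * ψ (m + 1) * β m * Y (j + 2) :=
            ih (fun i hi => mul_psi_mul_psi_eq_zero hx hi) hj (by omega)
        _ = x * (ψ (m + 1) * β m) * Y (j + 2) := by simp only [mul_assoc]
    · rw [← mul_assoc, mul_assoc x, y_mul_psi_self h, mul_add, mul_one, add_mul,
        mul_psiDesc_eq_zero (hx j j.lt_succ_self), add_zero, mul_assoc, mul_assoc,
        (commute_y_psiDesc (by omega)).eq]
      simp only [mul_assoc]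

theorem mul_y_zero_add_mul_psiDesc {x : NH k n} {m : ℕ} (hx : ∀ i < m, x * ψ i = 0)
    (h : m + 1 < n) : x * (Y 0 + Y (m + 1)) * β m = x * β m * (Y 0 + Y 1) := by
  induction m generalizing x with
  | zero => rw [psiDesc_zero, mul_assoc, (commute_y_add_y_succ_psi_self h).eq, mul_assoc]
  | succ m ih =>
    have key : (Y 0 + Y (m + 2)) * ψ (m + 1) = ψ (m + 1) * (Y 0 + Y (m + 1)) - 1 := by
      rw [add_mul, (commute_y_psi (by omega) (by omega)).eq, y_succ_mul_psi_self h, mul_add,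
        add_sub_assoc]
    calc x * (Y 0 + Y (m + 1 + 1)) * β (m + 1)
        = x * ((Y 0 + Y (m + 2)) * ψ (m + 1)) * β m := by
          rw [psiDesc_succ]
          simp only [mul_assoc]
      _ = x * ψ (m + 1) * (Y 0 + Y (m + 1)) * β m - x * β m := by
          rw [key, mul_sub, mul_one, sub_mul]
          simp only [mul_assoc]
      _ = x * β (m + 1) * (Y 0 + Y 1) := by
          rw [ih (fun i hi => mul_psi_mul_psi_eq_zero hx hi) (by omega),
            mul_psiDesc_eq_zero (hx m m.lt_succ_self), sub_zero, psiDesc_succ, mul_assoc x]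

theorem psiLongest_mul_sum_mul_psiDesc {m : ℕ} (h : m + 1 < n) :
    W m * (∑ j ∈ range (m + 1), (j + 1) • Y j) * β m
      = W (m + 1) * (Y 0 + ∑ j ∈ range (m + 2), j • Y j) - Y (m + 1) * W (m + 1) := by
  have hx : ∀ i < m, W m * ψ i = 0 := fun i hi => psiLongest_mul_psi hi
  have hmid : ∀ j ∈ range m,
      W m * ((j + 2) • Y (j + 1)) * β m = W (m + 1) * ((j + 2) • Y (j + 2)) := fun j hj => by
    rw [mul_smul_comm, smul_mul_assoc, mul_y_succ_mul_psiDesc hx (mem_range.mp hj) h,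
      psiLongest_succ, mul_smul_comm]
  have hzero : W m * Y 0 * β m = W (m + 1) * (Y 0 + Y 1) - Y (m + 1) * W (m + 1) := by
    have hsum := mul_y_zero_add_mul_psiDesc hx h
    rw [mul_add, add_mul, ← psiLongest_succ] at hsum
    rw [← hsum, psiLongest_succ, ← mul_assoc, (commute_y_psiLongest m.lt_succ_self).eq,
      add_sub_cancel_right]
  have hL : ∑ j ∈ range (m + 1), (j + 1) • Y j = ∑ j ∈ range m, (j + 2) • Y (j + 1) + Y 0 := by
    rw [sum_range_succ']
    simp only [zero_add, one_smul]
  have hR : ∑ j ∈ range (m + 2), j • Y j = ∑ j ∈ range m, (j + 2) • Y (j + 2) + Y 1 := by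
    rw [sum_range_succ', sum_range_succ']
    simp only [zero_smul, add_zero, zero_add, one_smul]
  rw [hL, hR, mul_add, add_mul, hzero, mul_sum, sum_mul, sum_congr rfl hmid, ← mul_sum]
  noncomm_ring

section Derivation

variable (D : NH k n → NH k n) (hD : ∀ a b, D (a * b) = D a * b + a * D b)
  (hpsi : ∀ i : ℕ, D (psi k n i) = -(y k n i * psi k n i) - psi k n i * y k n (i + 1))
include hD hpsi

theorem leibniz_psiDesc (m : ℕ) :
    D (β m) = -((∑ j ∈ range (m + 1), Y j) * β m) - β m * ∑ j ∈ range (m + 1), Y (j + 1) := by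
  induction m with
  | zero => simp [psiDesc_zero, hpsi]
  | succ m ih =>
    set S := ∑ j ∈ range (m + 1), Y j
    set T := ∑ j ∈ range (m + 1), Y (j + 1)
    have hS : ψ (m + 1) * S = S * ψ (m + 1) :=
      (Commute.sum_left _ _ _ fun j hj => commute_y_psi (by simp at hj; omega)
        (by simp at hj; omega)).eq.symm
    have hT : Y (m + 2) * β m = β m * Y (m + 2) := (commute_y_psiDesc (by omega)).eq
    have eA : (-(Y (m + 1) * ψ (m + 1)) - ψ (m + 1) * Y (m + 1 + 1)) * β m
        = -(Y (m + 1) * (ψ (m + 1) * β m)) - ψ (m + 1) * β m * Y (m + 2) := by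
      rw [sub_mul, NH.neg_mul, mul_assoc, mul_assoc, hT, mul_assoc]
    have eB : ψ (m + 1) * (-(S * β m) - β m * T)
        = -(S * (ψ (m + 1) * β m)) - ψ (m + 1) * β m * T := by
      rw [mul_sub, NH.mul_neg, ← mul_assoc, hS, mul_assoc, mul_assoc]
    rw [psiDesc_succ, hD, hpsi, ih, eA, eB, sum_range_succ Y (m + 1),
      sum_range_succ (fun j => Y (j + 1)) (m + 1)]
    simp only [add_mul, mul_add]
    abel

theorem leibniz_psiLongest {m : ℕ} (h : m < n) :
    D (W m) = -((∑ i ∈ range (m + 1), (m - i) • Y i) * W m)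
      - W m * ∑ i ∈ range (m + 1), i • Y i := by
  induction m with
  | zero => simp [psiLongest_zero, leibniz_map_one D hD]
  | succ m ih =>
    set A := ∑ i ∈ range (m + 1), (m - i) • Y i
    set S := ∑ j ∈ range (m + 1), Y j with hS
    set T := ∑ j ∈ range (m + 1), Y (j + 1)
    have hA : ∑ i ∈ range (m + 2), (m + 1 - i) • Y i = A + S := by
      rw [sum_range_succ, Nat.sub_self, zero_smul, add_zero, ← sum_add_distrib]
      refine sum_congr rfl fun i hi => ?_
      rw [show m + 1 - i = m - i + 1 by simp at hi; omega, succ_nsmul]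
    have hBS : ∑ i ∈ range (m + 1), i • Y i + S = ∑ i ∈ range (m + 1), (i + 1) • Y i := by
      simp only [S, ← sum_add_distrib, succ_nsmul]
    have hT : Y 0 + T = S + Y (m + 1) := by
      rw [add_comm, ← sum_range_succ' Y, sum_range_succ]
    have hcomm : (S + Y (m + 1)) * W (m + 1) = W (m + 1) * (S + Y (m + 1)) := by
      rw [← sum_range_succ]
      exact (commute_sum_y_psiLongest h).eq
    calc D (W (m + 1))
        = -(A * W (m + 1)) - W m * (∑ i ∈ range (m + 1), i • Y i + S) * β m
          - W (m + 1) * T := by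
          rw [psiLongest_succ, hD, ih (by omega), leibniz_psiDesc D hD hpsi, ← hS]
          simp only [sub_mul, mul_sub, add_mul, mul_add, NH.neg_mul, NH.mul_neg, mul_assoc]
          abel
      _ = -(A * W (m + 1)) - W (m + 1) * (∑ i ∈ range (m + 2), i • Y i)
          - W (m + 1) * (Y 0 + T) + Y (m + 1) * W (m + 1) := by
          rw [hBS, psiLongest_mul_sum_mul_psiDesc (by omega), psiLongest_succ]
          simp only [mul_add]
          abel
      _ = _ := by
          rw [hT, ← hcomm, hA, add_mul, add_mul]
          abel

end Derivation

end Stmt13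

open Stmt13 in
theorem stmt_13_general (k : Type*) [Field k] (n : ℕ)
    (D : NH k n →ₗ[k] NH k n)
    (hLeib : ∀ a b : NH k n, D (a * b) = D a * b + a * D b)
    (hy : ∀ i : ℕ, D (y k n i) = y k n i * y k n i)
    (hpsi : ∀ i : ℕ, D (psi k n i) =
      -(y k n i * psi k n i) - psi k n i * y k n (i+1)) :
    D (ePrime k n) = -((∑ i ∈ Finset.range n, (n - 1 - i) • y k n i) * ePrime k n) := by
  obtain _ | m := n
  · simp [ePrime, psiW0, leibniz_map_one D hLeib]
  · have hW := leibniz_psiLongest D hLeib hpsi m.lt_succ_self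
    have hY := leibniz_map_prod_range_pow_self D hLeib commute_y_y hy (m + 1)
    rw [ePrime, psiW0_eq_psiLongest, Nat.add_sub_cancel, hLeib, hW, hY]
    simp only [sub_mul, NH.neg_mul, mul_assoc]
    abel

open Stmt13 in
/-- In the nilHecke algebra `NH_n` with `p`-differential `∂`, the element
`e_n' = ψ_{w₀} · y_1^0 y_2^1 ⋯ y_n^{n-1}` satisfies
`∂(e_n') = −(Σ_{i<n} (n−1−i) • y_i) · e_n'` (0-based indexing of the paper's
`−Σ_{i=1}^n (n−i) y_i e_n'`). -/
theorem stmt_13 (k : Type*) [Field k] (p : ℕ) [Fact p.Prime] [CharP k p] (n : ℕ)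
    (D : NH k n →ₗ[k] NH k n)
    (hLeib : ∀ a b : NH k n, D (a * b) = D a * b + a * D b)
    (hy : ∀ i : ℕ, D (y k n i) = y k n i * y k n i)
    (hpsi : ∀ i : ℕ, D (psi k n i) =
      -(y k n i * psi k n i) - psi k n i * y k n (i+1)) :
    D (ePrime k n) = -((∑ i ∈ Finset.range n, (n - 1 - i) • y k n i) * ePrime k n) :=
  stmt_13_general k n D hLeib hy hpsi
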